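/- For every t ∈ ℝ, the limit as s → 0 (s ≠ 0) of K^B_{22}(γ(t), γ(t+s)) equals κ(t)/(2π), where for x ≠ γ(s′) one defines K^B_{22}(x, γ(s′)) = (1/(2π))·[(r·τ(s′))(τ(s′)·n(t)) − (r·n(s′))(n(s′)·n(t))]/‖r‖² + (1/(2π))·(r·n(t))·[(r·n(s′))² − (r·τ(s′))²]/‖r‖⁴ with r = x − γ(s′); K^B_{22} equals −G^B_{n_x n_y n_y} + G^B_{n_x τ_y τ_y}, the x-derivative taken in the direction n(t). -/

import Mathlib

/-! Write `r = γ t - γ (t + s)` and use the moving frame `(τ(t+s), n(t+s))`. Taylor expansion gives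
`r·τ(t+s) = -s + o(s)`, `r·n(t+s) = -κ(t) s²/2 + o(s²)`, `τ(t+s)·n(t) = O(s)` and
`n(t+s)·n(t) → 1`. In these four coordinates the kernel is a rational function which, after the
substitution `a = s A`, `b = s² B`, `p = s P`, becomes continuous at `s = 0` with value
`-B Q / (π A²) = κ(t) / (2π)`. -/

open Real Filter Topology MeasureTheory

noncomputable section

/-- Euclidean dot product on `ℝ × ℝ`. -/
def dot2 (v w : ℝ × ℝ) : ℝ := v.1 * w.1 + v.2 * w.2

/-- Unit tangent vector `τ(s) = γ′(s)`. -/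
def tang (γ : ℝ → ℝ × ℝ) (s : ℝ) : ℝ × ℝ := deriv γ s

/-- Unit normal vector `n(s) = (τ₂(s), −τ₁(s))`. -/
def nor (γ : ℝ → ℝ × ℝ) (s : ℝ) : ℝ × ℝ := ((deriv γ s).2, -(deriv γ s).1)

/-- Signed curvature `κ(s) = −γ″(s)·n(s)`. -/
def curv (γ : ℝ → ℝ × ℝ) (s : ℝ) : ℝ := -(dot2 (deriv (deriv γ) s) (nor γ s))

/-- Explicit formula for `K^B_{22}(x, γ(s')) = −G^B_{n_x n_y n_y} + G^B_{n_x τ_y τ_y}`,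
with `r = x − γ(s')` and the `x`-derivative in the direction `n(t)`. -/
def K22B (γ : ℝ → ℝ × ℝ) (t : ℝ) (x : ℝ × ℝ) (s' : ℝ) : ℝ :=
  1 / (2 * π) *
      (dot2 (x - γ s') (tang γ s') * dot2 (tang γ s') (nor γ t)
        - dot2 (x - γ s') (nor γ s') * dot2 (nor γ s') (nor γ t))
      / dot2 (x - γ s') (x - γ s')
    + 1 / (2 * π) * dot2 (x - γ s') (nor γ t) *
      ((dot2 (x - γ s') (nor γ s')) ^ 2 - (dot2 (x - γ s') (tang γ s')) ^ 2)
      / (dot2 (x - γ s') (x - γ s')) ^ 2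

def rot (v : ℝ × ℝ) : ℝ × ℝ := (v.2, -v.1)

lemma nor_eq_rot (γ : ℝ → ℝ × ℝ) (s : ℝ) : nor γ s = rot (deriv γ s) := rfl

lemma dot2_comm (v w : ℝ × ℝ) : dot2 v w = dot2 w v := by
  simp only [dot2]; ring

lemma dot2_rot_self (v : ℝ × ℝ) : dot2 v (rot v) = 0 := by
  simp only [dot2, rot]; ring

lemma dot2_rot_rot (v w : ℝ × ℝ) : dot2 (rot v) (rot w) = dot2 v w := by
  simp only [dot2, rot]; ring

lemma dot2_eq_of_orthonormal {u : ℝ × ℝ} (hu : dot2 u u = 1) (r v : ℝ × ℝ) :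
    dot2 r v = dot2 r u * dot2 u v + dot2 r (rot u) * dot2 (rot u) v := by
  simp only [dot2, rot] at hu ⊢
  linear_combination (-(r.1 * v.1 + r.2 * v.2)) * hu

lemma HasDerivAt.dot2 {f g : ℝ → ℝ × ℝ} {f' g' : ℝ × ℝ} {x : ℝ}
    (hf : HasDerivAt f f' x) (hg : HasDerivAt g g' x) :
    HasDerivAt (fun y => dot2 (f y) (g y)) (dot2 f' (g x) + dot2 (f x) g') x := by
  have hf₁ := hasFDerivAt_fst.comp_hasDerivAt x hf
  have hf₂ := hasFDerivAt_snd.comp_hasDerivAt x hf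
  have hg₁ := hasFDerivAt_fst.comp_hasDerivAt x hg
  have hg₂ := hasFDerivAt_snd.comp_hasDerivAt x hg
  refine ((hf₁.mul hg₁).add (hf₂.mul hg₂)).congr_deriv ?_
  simp only [_root_.dot2, ContinuousLinearMap.coe_fst', ContinuousLinearMap.coe_snd',
    Function.comp_apply]
  ring

lemma HasDerivAt.rot {f : ℝ → ℝ × ℝ} {f' : ℝ × ℝ} {x : ℝ} (hf : HasDerivAt f f' x) :
    HasDerivAt (fun y => rot (f y)) (rot f') x := by
  have hf₁ := hasFDerivAt_fst.comp_hasDerivAt x hf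
  have hf₂ := hasFDerivAt_snd.comp_hasDerivAt x hf
  exact hf₂.prodMk hf₁.neg

def kernelForm (a b p q : ℝ) : ℝ :=
  ((a * p - b * q) / (a ^ 2 + b ^ 2) + (a * p + b * q) * (b ^ 2 - a ^ 2) / (a ^ 2 + b ^ 2) ^ 2)
    / (2 * π)

lemma K22B_eq_kernelForm (γ : ℝ → ℝ × ℝ) (t : ℝ) (x : ℝ × ℝ) {s' : ℝ}
    (h : dot2 (deriv γ s') (deriv γ s') = 1) :
    K22B γ t x s' = kernelForm (dot2 (x - γ s') (deriv γ s')) (dot2 (x - γ s') (nor γ s'))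
      (dot2 (deriv γ s') (nor γ t)) (dot2 (nor γ s') (nor γ t)) := by
  have hrr := dot2_eq_of_orthonormal h (x - γ s') (x - γ s')
  have hrn := dot2_eq_of_orthonormal h (x - γ s') (nor γ t)
  rw [dot2_comm (deriv γ s') (x - γ s'), dot2_comm (rot _) (x - γ s')] at hrr
  rw [← nor_eq_rot] at hrr hrn
  simp only [K22B, tang, kernelForm]
  rw [hrr, hrn]
  ring

lemma kernelForm_mul_scale {s : ℝ} (hs : s ≠ 0) (A B P Q : ℝ) :
    kernelForm (s * A) (s ^ 2 * B) (s * P) Q =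
      ((A * P - B * Q) / (A ^ 2 + s ^ 2 * B ^ 2)
        + (A * P + B * Q) * (s ^ 2 * B ^ 2 - A ^ 2) / (A ^ 2 + s ^ 2 * B ^ 2) ^ 2) / (2 * π) := by
  have hs2 : s ^ 2 ≠ 0 := pow_ne_zero 2 hs
  have hs4 : (s ^ 2) ^ 2 ≠ 0 := pow_ne_zero 2 hs2
  rw [kernelForm,
    show s * A * (s * P) - s ^ 2 * B * Q = s ^ 2 * (A * P - B * Q) by ring,
    show (s * A) ^ 2 + (s ^ 2 * B) ^ 2 = s ^ 2 * (A ^ 2 + s ^ 2 * B ^ 2) by ring,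
    show (s * A * (s * P) + s ^ 2 * B * Q) * ((s ^ 2 * B) ^ 2 - (s * A) ^ 2)
      = (s ^ 2) ^ 2 * ((A * P + B * Q) * (s ^ 2 * B ^ 2 - A ^ 2)) by ring,
    mul_pow (s ^ 2), mul_div_mul_left _ _ hs2, mul_div_mul_left _ _ hs4]

lemma tendsto_kernelForm {a b p q : ℝ → ℝ} {A B P Q : ℝ} (hA : A ≠ 0)
    (ha : Tendsto (fun s => a s / s) (𝓝[≠] 0) (𝓝 A))
    (hb : Tendsto (fun s => b s / s ^ 2) (𝓝[≠] 0) (𝓝 B))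
    (hp : Tendsto (fun s => p s / s) (𝓝[≠] 0) (𝓝 P))
    (hq : Tendsto q (𝓝[≠] 0) (𝓝 Q)) :
    Tendsto (fun s => kernelForm (a s) (b s) (p s) (q s)) (𝓝[≠] 0)
      (𝓝 (-(B * Q) / (π * A ^ 2))) := by
  have hs : Tendsto (fun s : ℝ => s ^ 2) (𝓝[≠] 0) (𝓝 0) :=
    ((continuous_pow 2).tendsto' 0 0 (zero_pow two_ne_zero)).mono_left nhdsWithin_le_nhds
  have hden : Tendsto (fun s => (a s / s) ^ 2 + s ^ 2 * (b s / s ^ 2) ^ 2) (𝓝[≠] 0)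
      (𝓝 (A ^ 2)) := by
    simpa using (ha.pow 2).add (hs.mul (hb.pow 2))
  have hA2 : A ^ 2 ≠ 0 := pow_ne_zero 2 hA
  have hlim := ((((ha.mul hp).sub (hb.mul hq)).div hden hA2).add
    ((((ha.mul hp).add (hb.mul hq)).mul ((hs.mul (hb.pow 2)).sub (ha.pow 2))).div
      (hden.pow 2) (pow_ne_zero 2 hA2))).div_const (2 * π)
  have hval : ((A * P - B * Q) / A ^ 2 + (A * P + B * Q) * (0 * B ^ 2 - A ^ 2) / (A ^ 2) ^ 2)
      / (2 * π) = -(B * Q) / (π * A ^ 2) := by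
    field_simp
    ring
  rw [hval] at hlim
  refine hlim.congr' ?_
  filter_upwards [self_mem_nhdsWithin] with s (hs0 : s ≠ 0)
  have h := kernelForm_mul_scale hs0 (a s / s) (b s / s ^ 2) (p s / s) (q s)
  rw [mul_div_cancel₀ _ hs0, mul_div_cancel₀ _ (pow_ne_zero 2 hs0), mul_div_cancel₀ _ hs0] at h
  exact h.symm

lemma tendsto_div_of_hasDerivAt_zero {f : ℝ → ℝ} {f' : ℝ} (hf : HasDerivAt f f' 0)
    (h0 : f 0 = 0) : Tendsto (fun s => f s / s) (𝓝[≠] 0) (𝓝 f') := by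
  refine (hasDerivAt_iff_tendsto_slope.mp hf).congr fun s => ?_
  rw [slope_def_field, h0, sub_zero, sub_zero]

lemma tendsto_div_sq_of_hasDerivAt_zero {f f' : ℝ → ℝ} {c : ℝ}
    (hf : ∀ s, HasDerivAt f (f' s) s) (hf' : HasDerivAt f' c 0) (h0 : f 0 = 0) (h0' : f' 0 = 0) :
    Tendsto (fun s => f s / s ^ 2) (𝓝[≠] 0) (𝓝 (c / 2)) := by
  refine HasDerivAt.lhopital_zero_nhdsNE (f' := f') (g' := fun s => 2 * s)
    (.of_forall hf) (.of_forall fun s => ?_) ?_ ?_ ?_ ?_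
  · simpa [mul_comm] using hasDerivAt_pow 2 s
  · filter_upwards [self_mem_nhdsWithin] with s (hs : s ≠ 0) using mul_ne_zero two_ne_zero hs
  · simpa [h0] using (hf 0).continuousAt.tendsto.mono_left nhdsWithin_le_nhds
  · exact ((continuous_pow 2).tendsto' 0 0 (zero_pow two_ne_zero)).mono_left nhdsWithin_le_nhds
  · refine ((tendsto_div_of_hasDerivAt_zero hf' h0').div_const 2).congr fun s => ?_
    rw [div_div, mul_comm]

lemma hasDerivAt_deriv_of_contDiff {E : Type*} [NormedAddCommGroup E] [NormedSpace ℝ E]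
    {n : WithTop ℕ∞} {f : ℝ → E} (hf : ContDiff ℝ n f) (hn : n ≠ 0) (x : ℝ) : HasDerivAt f (deriv f x) x :=
  (hf.differentiable hn x).hasDerivAt

section Curve

variable {γ : ℝ → ℝ × ℝ} (t : ℝ)

lemma hasDerivAt_chord (hγ : ContDiff ℝ 1 γ) (s : ℝ) :
    HasDerivAt (fun s => γ t - γ (t + s)) (-deriv γ (t + s)) s :=
  ((hasDerivAt_deriv_of_contDiff hγ one_ne_zero (t + s)).comp_const_add t s).const_sub (γ t)

lemma tendsto_dot2_chord_tangent_div (hγ : ContDiff ℝ 2 γ) :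
    Tendsto (fun s => dot2 (γ t - γ (t + s)) (deriv γ (t + s)) / s) (𝓝[≠] 0)
      (𝓝 (-dot2 (deriv γ t) (deriv γ t))) := by
  refine tendsto_div_of_hasDerivAt_zero ?_ (by simp [dot2])
  have hT := (hasDerivAt_deriv_of_contDiff hγ.deriv' one_ne_zero (t + 0)).comp_const_add t 0
  refine ((hasDerivAt_chord t (hγ.of_le one_le_two) 0).dot2 hT).congr_deriv ?_
  simp only [dot2, add_zero, sub_self, Prod.fst_neg, Prod.snd_neg, Prod.fst_zero, Prod.snd_zero,
    zero_mul]
  ring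

lemma tendsto_dot2_tangent_normal_div (hγ : ContDiff ℝ 2 γ) :
    Tendsto (fun s => dot2 (deriv γ (t + s)) (nor γ t) / s) (𝓝[≠] 0)
      (𝓝 (dot2 (deriv (deriv γ) t) (nor γ t))) := by
  refine tendsto_div_of_hasDerivAt_zero ?_ (by simp [nor_eq_rot, dot2_rot_self])
  have hT := (hasDerivAt_deriv_of_contDiff hγ.deriv' one_ne_zero (t + 0)).comp_const_add t 0
  refine (hT.dot2 (hasDerivAt_const 0 (nor γ t))).congr_deriv ?_
  simp [dot2]

lemma tendsto_dot2_normal_normal (hγ : ContDiff ℝ 1 γ) :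
    Tendsto (fun s => dot2 (nor γ (t + s)) (nor γ t)) (𝓝[≠] 0)
      (𝓝 (dot2 (deriv γ t) (deriv γ t))) := by
  have hcont : Continuous fun s => dot2 (nor γ (t + s)) (nor γ t) := by
    have hT := hγ.continuous_deriv le_rfl
    simp only [nor, dot2]
    fun_prop
  simpa [nor_eq_rot, dot2_rot_rot] using
    hcont.continuousAt.tendsto.mono_left (nhdsWithin_le_nhds (a := 0))

lemma tendsto_dot2_chord_normal_div_sq (hγ : ContDiff ℝ 3 γ) :
    Tendsto (fun s => dot2 (γ t - γ (t + s)) (nor γ (t + s)) / s ^ 2) (𝓝[≠] 0)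
      (𝓝 (-curv γ t / 2)) := by
  have hE : ∀ s, HasDerivAt (fun s => deriv (deriv γ) (t + s)) (deriv (deriv (deriv γ)) (t + s)) s :=
    fun s => (hasDerivAt_deriv_of_contDiff hγ.deriv'.deriv' one_ne_zero (t + s)).comp_const_add t s
  have hN : ∀ s, HasDerivAt (fun s => nor γ (t + s)) (rot (deriv (deriv γ) (t + s))) s :=
    fun s => ((hasDerivAt_deriv_of_contDiff hγ.deriv' two_ne_zero (t + s)).comp_const_add t s).rot
  have hchord := hasDerivAt_chord t (hγ.of_le (by norm_num))
  refine tendsto_div_sq_of_hasDerivAt_zero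
    (f' := fun s => dot2 (γ t - γ (t + s)) (rot (deriv (deriv γ) (t + s)))) (fun s => ?_) ?_
    (by simp [dot2]) (by simp [dot2])
  · refine ((hchord s).dot2 (hN s)).congr_deriv ?_
    simp only [nor_eq_rot, dot2, rot, Prod.fst_neg, Prod.snd_neg]
    ring
  · refine ((hchord 0).dot2 (hE 0).rot).congr_deriv ?_
    simp only [curv, nor_eq_rot, dot2, rot, add_zero, sub_self, Prod.fst_neg, Prod.snd_neg,
      Prod.fst_zero, Prod.snd_zero, zero_mul]
    ring

end Curve

theorem stmt3_general (γ : ℝ → ℝ × ℝ)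
    (hγ : ContDiff ℝ (⊤ : ℕ∞) γ)
    (harc : ∀ s, dot2 (deriv γ s) (deriv γ s) = 1)
    (t : ℝ) :
    Tendsto (fun s : ℝ => K22B γ t (γ t) (t + s)) (𝓝[≠] (0 : ℝ))
      (𝓝 (curv γ t / (2 * π))) := by
  have hγ3 : ContDiff ℝ 3 γ := hγ.of_le (WithTop.coe_le_coe.mpr le_top)
  have hlim := tendsto_kernelForm (neg_ne_zero.mpr one_ne_zero)
    (by simpa [harc] using tendsto_dot2_chord_tangent_div t (hγ3.of_le (by norm_num)))
    (tendsto_dot2_chord_normal_div_sq t hγ3)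
    (tendsto_dot2_tangent_normal_div t (hγ3.of_le (by norm_num)))
    (by simpa [harc] using tendsto_dot2_normal_normal t (hγ3.of_le (by norm_num)))
  have hval : -(-curv γ t / 2 * 1) / (π * (-1) ^ 2) = curv γ t / (2 * π) := by
    field_simp
  rw [hval] at hlim
  simpa only [K22B_eq_kernelForm γ t (γ t) (harc _)] using hlim

theorem stmt3 (L : ℝ) (hL : 0 < L) (γ : ℝ → ℝ × ℝ)
    (hγ : ContDiff ℝ (⊤ : ℕ∞) γ)
    (hper : ∀ s, γ (s + L) = γ s)
    (hinj : Set.InjOn γ (Set.Ico 0 L))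
    (harc : ∀ s, dot2 (deriv γ s) (deriv γ s) = 1)
    (t : ℝ) :
    Tendsto (fun s : ℝ => K22B γ t (γ t) (t + s)) (𝓝[≠] (0 : ℝ))
      (𝓝 (curv γ t / (2 * π))) :=
  stmt3_general γ hγ harc t
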